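/- arXiv:1905.02288 — 3 statements merged into one kernel-verified Lean document; each statement's English description precedes it below -/
import Mathlib

section
/- Brunn–Minkowski inequality in the plane: if A and B are nonempty compact (or measurable with measurable sum) subsets of ℝ², then (Area(A + B))^{1/2} ≥ (Area A)^{1/2} + (Area B)^{1/2}. -/
open MvPolynomial MeasureTheory Pointwise

noncomputable section

/-- Polynomials in two complex variables. -/
abbrev P2 := MvPolynomial (Fin 2) ℂ

/-- The `w`-weight of a monomial exponent. -/
def wt (w : ℝ × ℝ) (m : Fin 2 →₀ ℕ) : ℝ := w.1 * (m 0 : ℝ) + w.2 * (m 1 : ℝ)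

/-- `d_w(f)`: maximal `w`-weight of a monomial of `f`. -/
def dw (w : ℝ × ℝ) (f : P2) : ℝ := sSup (wt w '' (f.support : Set (Fin 2 →₀ ℕ)))

open Classical in
/-- The initial form `init(f, w)`: sum of the monomials of `f` of maximal `w`-weight. -/
def initForm (w : ℝ × ℝ) (f : P2) : P2 :=
  ∑ m ∈ f.support, if wt w m = dw w f then monomial m (f.coeff m) else 0

/-- `f` is quasi-convenient: some pure power of `X` and some pure power of `Y`
occur in `f` with nonzero coefficient. -/
def QuasiConvenient (f : P2) : Prop :=
  (∃ a : ℕ, f.coeff (Finsupp.single 0 a) ≠ 0) ∧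
  (∃ b : ℕ, f.coeff (Finsupp.single 1 b) ≠ 0)

/-- The Newton diagram at infinity `Δ∞(f)`. -/
def newton (f : P2) : Set (ℝ × ℝ) :=
  convexHull ℝ ({(0, 0)} ∪ {p : ℝ × ℝ | ∃ m ∈ f.support, p = ((m 0 : ℝ), (m 1 : ℝ))})

/-- Area (2-dimensional Lebesgue measure) of a plane set. -/
def area (S : Set (ℝ × ℝ)) : ℝ := (volume S).toReal

/-- `ν∞(f, g)`. -/
def nuInf (f g : P2) : ℝ := area (newton (f * g)) - area (newton f) - area (newton g)

/-- `f` is nondegenerate at infinity. -/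
def NondegAtInf (f : P2) : Prop :=
  ∀ w : ℝ × ℝ, (0 < w.1 ∨ 0 < w.2) →
    ¬ ∃ x y : ℂ, x ≠ 0 ∧ y ≠ 0 ∧
      eval ![x, y] (initForm w f) = 0 ∧
      eval ![x, y] (pderiv 0 (initForm w f)) = 0 ∧
      eval ![x, y] (pderiv 1 (initForm w f)) = 0

/-- The pair `(f, g)` is nondegenerate at infinity. -/
def PairNondegAtInf (f g : P2) : Prop :=
  ∀ w : ℝ × ℝ, (0 < w.1 ∨ 0 < w.2) →
    ¬ ∃ x y : ℂ, x ≠ 0 ∧ y ≠ 0 ∧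
      eval ![x, y] (initForm w f) = 0 ∧ eval ![x, y] (initForm w g) = 0

/-- `g` and `h` have no common nonunit factor. -/
def CoprimeDiv (g h : P2) : Prop := ∀ d : P2, d ∣ g → d ∣ h → IsUnit d

/-- `f` is nearly irreducible: positive degree, and any two nonconstant factors
have a common zero in `ℂ²`. -/
def NearlyIrreducible (f : P2) : Prop :=
  0 < f.totalDegree ∧
  ∀ g h : P2, g ∣ f → h ∣ f → 0 < g.totalDegree → 0 < h.totalDegree →
    ∃ x y : ℂ, eval ![x, y] g = 0 ∧ eval ![x, y] h = 0

/-- The maximal ideal of polynomials vanishing at a point `P ∈ ℂ²`. -/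
def mIdeal (Pt : ℂ × ℂ) : Ideal P2 := RingHom.ker (eval ![Pt.1, Pt.2] : P2 →+* ℂ)

instance (Pt : ℂ × ℂ) : (mIdeal Pt).IsPrime := RingHom.ker_isPrime _

/-- Intersection multiplicity `(f, g)_P`: the `ℂ`-dimension of the quotient of the
local ring of `ℂ²` at `P` by the ideal generated by `f` and `g`. -/
def interMult (f g : P2) (Pt : ℂ × ℂ) : ℕ :=
  Module.finrank ℂ
    (Localization.AtPrime (mIdeal Pt) ⧸
      Ideal.span {algebraMap P2 (Localization.AtPrime (mIdeal Pt)) f,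
                  algebraMap P2 (Localization.AtPrime (mIdeal Pt)) g})

/-!
The proof goes through the Prékopa–Leindler inequality. On the line, `K + L` contains the
translates `K + inf L` and `sup K + L`, which overlap in a single point, so
`|K| + |L| ≤ |K + L|`; inner regularity extends this from compact to measurable sets.
Integrating it over the superlevel sets of two functions normalised to supremum `1` gives
Prékopa–Leindler on `ℝ`. Applied to the slice volumes `x ↦ |S_x|`, `y ↦ |T_y|` of compact plane
sets (the slices satisfy the one-dimensional inequality) it yields
`|S| ^ (1 - l) * |T| ^ l ≤ |(1 - l) • S + l • T|`. Finally, for `l = √|B| / (√|A| + √|B|)` the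
sets `S = (1 - l)⁻¹ • A` and `T = l⁻¹ • B` both have area `(√|A| + √|B|) ^ 2`.
-/

open Set
open scoped ENNReal

theorem measure_le_measure_add_right {G : Type*} [AddCommGroup G] [MeasurableSpace G]
    (μ : Measure G) [μ.IsAddLeftInvariant] (s : Set G) {t : Set G} (ht : t.Nonempty) :
    μ s ≤ μ (s + t) := by
  obtain ⟨b, hb⟩ := ht
  calc μ s = μ (b +ᵥ s) := (measure_vadd μ b s).symm
    _ ≤ μ (s + t) := measure_mono <| by
      rintro _ ⟨a, ha, rfl⟩
      exact ⟨a, ha, b, hb, add_comm a b⟩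

theorem Real.volume_add_volume_le_volume_add_of_isCompact {K L : Set ℝ} (hK : IsCompact K)
    (hL : IsCompact L) (hK₀ : K.Nonempty) (hL₀ : L.Nonempty) :
    volume K + volume L ≤ volume (K + L) := by
  set x := sSup K
  set y := sInf L
  have hunion : (y +ᵥ K) ∪ (x +ᵥ L) ⊆ K + L := by
    rintro _ (⟨k, hk, rfl⟩ | ⟨l, hl, rfl⟩)
    · exact ⟨k, hk, y, hL.sInf_mem hL₀, add_comm k y⟩
    · exact ⟨x, hK.sSup_mem hK₀, l, hl, rfl⟩
  have hinter : (y +ᵥ K) ∩ (x +ᵥ L) ⊆ {x + y} := by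
    rintro _ ⟨⟨k, hk, rfl⟩, l, hl, hlk⟩
    have hkx : k ≤ x := le_csSup hK.bddAbove hk
    have hyl : y ≤ l := csInf_le hL.bddBelow hl
    simp only [vadd_eq_add] at hlk ⊢
    rw [mem_singleton_iff]
    linarith
  calc volume K + volume L = volume (y +ᵥ K) + volume (x +ᵥ L) := by
        rw [measure_vadd, measure_vadd]
    _ = volume ((y +ᵥ K) ∪ (x +ᵥ L)) + volume ((y +ᵥ K) ∩ (x +ᵥ L)) :=
        (measure_union_add_inter _ (hL.vadd x).measurableSet).symm
    _ = volume ((y +ᵥ K) ∪ (x +ᵥ L)) := by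
        rw [measure_mono_null hinter (measure_singleton _), add_zero]
    _ ≤ volume (K + L) := measure_mono hunion

theorem Real.volume_add_volume_le_volume_add {s t : Set ℝ} (hs : MeasurableSet s)
    (ht : MeasurableSet t) (hs₀ : s.Nonempty) (ht₀ : t.Nonempty) :
    volume s + volume t ≤ volume (s + t) := by
  rcases eq_or_ne (volume s) 0 with hs' | hs'
  · rw [hs', zero_add, add_comm]
    exact measure_le_measure_add_right volume t hs₀
  rcases eq_or_ne (volume t) 0 with ht' | ht'
  · rw [ht', add_zero]
    exact measure_le_measure_add_right volume s ht₀
  refine le_of_forall_lt fun c hc => ?_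
  obtain ⟨a, ha, b, hb, hc⟩ := ENNReal.exists_lt_add_of_lt_add hc hs' ht'
  obtain ⟨K, hKs, hK, haK⟩ := hs.exists_lt_isCompact ha
  obtain ⟨L, hLt, hL, hbL⟩ := ht.exists_lt_isCompact hb
  have hK₀ : K.Nonempty := nonempty_of_measure_ne_zero (ne_bot_of_gt haK)
  have hL₀ : L.Nonempty := nonempty_of_measure_ne_zero (ne_bot_of_gt hbL)
  calc c < a + b := hc
    _ ≤ volume K + volume L := add_le_add haK.le hbL.le
    _ ≤ volume (K + L) := volume_add_volume_le_volume_add_of_isCompact hK hL hK₀ hL₀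
    _ ≤ volume (s + t) := measure_mono (add_subset_add hKs hLt)

theorem ENNReal.rpow_one_sub_mul_rpow_le_add {l : ℝ} (hl₀ : 0 < l) (hl₁ : l < 1)
    (a b : ℝ≥0∞) :
    a ^ (1 - l) * b ^ l ≤ ENNReal.ofReal (1 - l) * a + ENNReal.ofReal l * b := by
  have hl₁' : 0 < 1 - l := sub_pos.2 hl₁
  rcases eq_or_ne a ∞ with rfl | ha
  · rw [ENNReal.mul_top (ENNReal.ofReal_pos.2 hl₁').ne', top_add]
    exact le_top
  rcases eq_or_ne b ∞ with rfl | hb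
  · rw [ENNReal.mul_top (ENNReal.ofReal_pos.2 hl₀).ne', add_top]
    exact le_top
  lift a to NNReal using ha
  lift b to NNReal using hb
  have key := NNReal.geom_mean_le_arith_mean2_weighted (1 - l).toNNReal l.toNNReal a b
    (by rw [← Real.toNNReal_add hl₁'.le hl₀.le, sub_add_cancel, Real.toNNReal_one])
  rw [Real.coe_toNNReal _ hl₁'.le, Real.coe_toNNReal _ hl₀.le] at key
  rw [← ENNReal.coe_rpow_of_nonneg _ hl₁'.le, ← ENNReal.coe_rpow_of_nonneg _ hl₀.le,
    ENNReal.ofReal, ENNReal.ofReal]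
  exact_mod_cast key

theorem Real.ofReal_mul_volume_add_ofReal_mul_volume_le_volume_smul_add_smul {a b : ℝ}
    (ha : 0 < a) (hb : 0 < b) {s t : Set ℝ} (hs : MeasurableSet s) (ht : MeasurableSet t)
    (hs₀ : s.Nonempty) (ht₀ : t.Nonempty) :
    ENNReal.ofReal a * volume s + ENNReal.ofReal b * volume t ≤ volume (a • s + b • t) := by
  rw [← pow_one a, ← pow_one b, ← Module.finrank_self ℝ,
    ← Measure.addHaar_smul_of_nonneg _ ha.le, ← Measure.addHaar_smul_of_nonneg _ hb.le,
    Module.finrank_self, pow_one, pow_one]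
  exact volume_add_volume_le_volume_add (hs.const_smul₀ _) (ht.const_smul₀ _)
    hs₀.smul_set ht₀.smul_set

theorem Real.volume_rpow_mul_volume_rpow_le_volume_smul_add_smul {l : ℝ} (hl₀ : 0 < l)
    (hl₁ : l < 1) {s t : Set ℝ} (hs : MeasurableSet s) (ht : MeasurableSet t) :
    volume s ^ (1 - l) * volume t ^ l ≤ volume ((1 - l) • s + l • t) := by
  have hl₁' : 0 < 1 - l := sub_pos.2 hl₁
  rcases s.eq_empty_or_nonempty with rfl | hs₀
  · simp [ENNReal.zero_rpow_of_pos hl₁']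
  rcases t.eq_empty_or_nonempty with rfl | ht₀
  · simp [ENNReal.zero_rpow_of_pos hl₀]
  exact (ENNReal.rpow_one_sub_mul_rpow_le_add hl₀ hl₁ _ _).trans
    (ofReal_mul_volume_add_ofReal_mul_volume_le_volume_smul_add_smul hl₁' hl₀ hs ht hs₀ ht₀)

theorem lintegral_eq_lintegral_meas_lt_of_ne_top {α : Type*} [MeasurableSpace α] (μ : Measure α)
    {f : α → ℝ≥0∞} (hf : Measurable f) (hf_top : ∀ x, f x ≠ ∞) :
    ∫⁻ x, f x ∂μ = ∫⁻ t in Ioi 0, μ {x | ENNReal.ofReal t < f x} := by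
  have h := lintegral_eq_lintegral_meas_lt μ (f := fun x => (f x).toReal)
    (ae_of_all _ fun _ => ENNReal.toReal_nonneg) hf.ennreal_toReal.aemeasurable
  simp only [ENNReal.ofReal_toReal (hf_top _)] at h
  rw [h]
  refine setLIntegral_congr_fun measurableSet_Ioi fun t ht => ?_
  simp only [ENNReal.ofReal_lt_iff_lt_toReal (le_of_lt ht) (hf_top _)]

theorem Real.prekopa_leindler_of_iSup_eq_one {l : ℝ} (hl₀ : 0 < l) (hl₁ : l < 1)
    {f g h : ℝ → ℝ≥0∞} (hf : Measurable f) (hg : Measurable g) (hh : Measurable h)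
    (hf₁ : ⨆ x, f x = 1) (hg₁ : ⨆ x, g x = 1)
    (hfgh : ∀ x y, f x ^ (1 - l) * g y ^ l ≤ h ((1 - l) * x + l * y)) :
    ENNReal.ofReal (1 - l) * (∫⁻ x, f x) + ENNReal.ofReal l * ∫⁻ x, g x
      ≤ ∫⁻ x, h x := by
  have hl₁' : 0 < 1 - l := sub_pos.2 hl₁
  have hf_le : ∀ x, f x ≤ 1 := fun x => hf₁ ▸ le_iSup f x
  have hg_le : ∀ x, g x ≤ 1 := fun x => hg₁ ▸ le_iSup g x
  -- truncating `h` at `1` keeps every function in the layer-cake formula finite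
  set h₁ : ℝ → ℝ≥0∞ := fun x => min (h x) 1
  have hne_top {φ : ℝ → ℝ≥0∞} (hφ : ∀ x, φ x ≤ 1) (x : ℝ) : φ x ≠ ∞ :=
    ne_top_of_le_ne_top ENNReal.one_ne_top (hφ x)
  have superlevel (t : ℝ) (ht : 0 < t) :
      ENNReal.ofReal (1 - l) * volume {x | ENNReal.ofReal t < f x}
        + ENNReal.ofReal l * volume {x | ENNReal.ofReal t < g x}
        ≤ volume {x | ENNReal.ofReal t < h₁ x} := by
    set T := ENNReal.ofReal t
    -- strict superlevel sets of `f` and `g` are nonempty below level `1` and empty from `1` on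
    rcases lt_or_ge T 1 with hT | hT
    · have hincl : (1 - l) • {x | T < f x} + l • {x | T < g x} ⊆ {x | T < h₁ x} := by
        rintro _ ⟨_, ⟨x, hx, rfl⟩, _, ⟨y, hy, rfl⟩, rfl⟩
        have hT₀ : T ≠ 0 := (ENNReal.ofReal_pos.2 ht).ne'
        refine lt_min (lt_of_lt_of_le ?_ (hfgh x y)) hT
        calc T = T ^ (1 - l) * T ^ l := by
              rw [← ENNReal.rpow_add _ _ hT₀ ENNReal.ofReal_ne_top, sub_add_cancel,
                ENNReal.rpow_one]
          _ < f x ^ (1 - l) * g y ^ l :=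
              ENNReal.mul_lt_mul (ENNReal.rpow_lt_rpow hx hl₁') (ENNReal.rpow_lt_rpow hy hl₀)
      have hne {φ : ℝ → ℝ≥0∞} (hφ : ⨆ x, φ x = 1) : {x | T < φ x}.Nonempty :=
        let ⟨x, hx⟩ := lt_iSup_iff.1 (hφ ▸ hT); ⟨x, hx⟩
      exact (Real.ofReal_mul_volume_add_ofReal_mul_volume_le_volume_smul_add_smul hl₁' hl₀
        (hf measurableSet_Ioi) (hg measurableSet_Ioi) (hne hf₁) (hne hg₁)).trans
        (measure_mono hincl)
    · have hempty {φ : ℝ → ℝ≥0∞} (hφ : ∀ x, φ x ≤ 1) : {x | T < φ x} = ∅ :=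
        eq_empty_of_forall_notMem fun x hx => (hx.trans_le (hφ x)).not_ge hT
      simp [hempty hf_le, hempty hg_le]
  calc ENNReal.ofReal (1 - l) * (∫⁻ x, f x) + ENNReal.ofReal l * ∫⁻ x, g x
      = (∫⁻ t in Ioi 0, ENNReal.ofReal (1 - l) * volume {x | ENNReal.ofReal t < f x})
          + ∫⁻ t in Ioi 0, ENNReal.ofReal l * volume {x | ENNReal.ofReal t < g x} := by
        rw [lintegral_eq_lintegral_meas_lt_of_ne_top volume hf (hne_top hf_le),
          lintegral_eq_lintegral_meas_lt_of_ne_top volume hg (hne_top hg_le),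
          lintegral_const_mul' _ _ ENNReal.ofReal_ne_top,
          lintegral_const_mul' _ _ ENNReal.ofReal_ne_top]
    _ ≤ ∫⁻ t in Ioi 0, (ENNReal.ofReal (1 - l) * volume {x | ENNReal.ofReal t < f x}
          + ENNReal.ofReal l * volume {x | ENNReal.ofReal t < g x}) := le_lintegral_add _ _
    _ ≤ ∫⁻ t in Ioi 0, volume {x | ENNReal.ofReal t < h₁ x} :=
        setLIntegral_mono' measurableSet_Ioi superlevel
    _ = ∫⁻ x, h₁ x :=
        (lintegral_eq_lintegral_meas_lt_of_ne_top _ (hh.min measurable_const)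
          (hne_top fun _ => min_le_right _ _)).symm
    _ ≤ ∫⁻ x, h x := lintegral_mono fun x => min_le_left _ _

theorem Real.prekopa_leindler {l : ℝ} (hl₀ : 0 < l) (hl₁ : l < 1) {f g h : ℝ → ℝ≥0∞}
    (hf : Measurable f) (hg : Measurable g) (hh : Measurable h)
    (hf_sup : ⨆ x, f x ≠ ∞) (hg_sup : ⨆ x, g x ≠ ∞)
    (hfgh : ∀ x y, f x ^ (1 - l) * g y ^ l ≤ h ((1 - l) * x + l * y)) :
    (∫⁻ x, f x) ^ (1 - l) * (∫⁻ x, g x) ^ l ≤ ∫⁻ x, h x := by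
  have hl₁' : 0 < 1 - l := sub_pos.2 hl₁
  set c := ⨆ x, f x
  set d := ⨆ x, g x
  rcases eq_or_ne c 0 with hc₀ | hc₀
  · have : ∫⁻ x, f x = 0 := by simp [ENNReal.iSup_eq_zero.1 hc₀]
    simp [this, ENNReal.zero_rpow_of_pos hl₁']
  rcases eq_or_ne d 0 with hd₀ | hd₀
  · have : ∫⁻ x, g x = 0 := by simp [ENNReal.iSup_eq_zero.1 hd₀]
    simp [this, ENNReal.zero_rpow_of_pos hl₀]
  -- rescale `f`, `g` to have supremum `1` and `h` by the matching factor
  have ha₀ : c ^ (1 - l) ≠ 0 := (ENNReal.rpow_pos (pos_iff_ne_zero.2 hc₀) hf_sup).ne'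
  have hb₀ : d ^ l ≠ 0 := (ENNReal.rpow_pos (pos_iff_ne_zero.2 hd₀) hg_sup).ne'
  have ha_top : c ^ (1 - l) ≠ ∞ := ENNReal.rpow_ne_top_of_nonneg hl₁'.le hf_sup
  have hb_top : d ^ l ≠ ∞ := ENNReal.rpow_ne_top_of_nonneg hl₀.le hg_sup
  set C := c ^ (1 - l) * d ^ l
  have hsup_one {φ : ℝ → ℝ≥0∞} {a : ℝ≥0∞} (ha₀ : a ≠ 0) (ha : a ≠ ∞)
      (hφ : ⨆ x, φ x = a) : ⨆ x, a⁻¹ * φ x = 1 := by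
    rw [← ENNReal.mul_iSup, hφ, ENNReal.inv_mul_cancel ha₀ ha]
  have hnormalized := Real.prekopa_leindler_of_iSup_eq_one hl₀ hl₁
    (hf.const_mul c⁻¹) (hg.const_mul d⁻¹) (hh.const_mul C⁻¹)
    (hsup_one hc₀ hf_sup rfl) (hsup_one hd₀ hg_sup rfl) fun x y => by
      rw [ENNReal.mul_rpow_of_nonneg _ _ hl₁'.le, ENNReal.mul_rpow_of_nonneg _ _ hl₀.le,
        mul_mul_mul_comm, ENNReal.inv_rpow, ENNReal.inv_rpow,
        ← ENNReal.mul_inv (Or.inr hb_top) (Or.inl ha_top)]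
      gcongr
      exact hfgh x y
  rw [lintegral_const_mul _ hf, lintegral_const_mul _ hg, lintegral_const_mul _ hh] at hnormalized
  calc (∫⁻ x, f x) ^ (1 - l) * (∫⁻ x, g x) ^ l
      = (c ^ (1 - l) * (c ^ (1 - l))⁻¹ * (∫⁻ x, f x) ^ (1 - l))
          * (d ^ l * (d ^ l)⁻¹ * (∫⁻ x, g x) ^ l) := by
        rw [ENNReal.mul_inv_cancel ha₀ ha_top, ENNReal.mul_inv_cancel hb₀ hb_top, one_mul,
          one_mul]
    _ = C * ((c⁻¹ * ∫⁻ x, f x) ^ (1 - l) * (d⁻¹ * ∫⁻ x, g x) ^ l) := by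
        rw [ENNReal.mul_rpow_of_nonneg _ _ hl₁'.le, ENNReal.mul_rpow_of_nonneg _ _ hl₀.le,
          ENNReal.inv_rpow, ENNReal.inv_rpow]
        ring
    _ ≤ C * (ENNReal.ofReal (1 - l) * (c⁻¹ * ∫⁻ x, f x)
          + ENNReal.ofReal l * (d⁻¹ * ∫⁻ x, g x)) := by
        gcongr
        exact ENNReal.rpow_one_sub_mul_rpow_le_add hl₀ hl₁ _ _
    _ ≤ C * (C⁻¹ * ∫⁻ x, h x) := by gcongr
    _ = ∫⁻ x, h x :=
        ENNReal.mul_inv_cancel_left (mul_ne_zero ha₀ hb₀) (ENNReal.mul_ne_top ha_top hb_top)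

theorem volume_rpow_mul_volume_rpow_le_volume_smul_add_smul_prod {l : ℝ} (hl₀ : 0 < l)
    (hl₁ : l < 1) {S T : Set (ℝ × ℝ)} (hS : IsCompact S) (hT : IsCompact T) :
    volume S ^ (1 - l) * volume T ^ l ≤ volume ((1 - l) • S + l • T) := by
  set W := (1 - l) • S + l • T
  have hW : IsCompact W := (hS.smul _).add (hT.smul _)
  have hslice_sup {K : Set (ℝ × ℝ)} (hK : IsCompact K) :
      ⨆ x, volume (Prod.mk x ⁻¹' K) ≠ ∞ :=
    ne_top_of_le_ne_top (hK.image continuous_snd).measure_lt_top.ne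
      (iSup_le fun x => measure_mono fun y hy => ⟨(x, y), hy, rfl⟩)
  have hslices (x y : ℝ) : volume (Prod.mk x ⁻¹' S) ^ (1 - l) * volume (Prod.mk y ⁻¹' T) ^ l
      ≤ volume (Prod.mk ((1 - l) * x + l * y) ⁻¹' W) := by
    refine (Real.volume_rpow_mul_volume_rpow_le_volume_smul_add_smul hl₀ hl₁
      (measurable_prodMk_left hS.measurableSet) (measurable_prodMk_left hT.measurableSet)).trans
      (measure_mono ?_)
    rintro _ ⟨_, ⟨u, hu, rfl⟩, _, ⟨v, hv, rfl⟩, rfl⟩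
    exact ⟨(1 - l) • (x, u), smul_mem_smul_set hu, l • (y, v), smul_mem_smul_set hv,
      by simp⟩
  simpa only [Measure.volume_eq_prod, Measure.prod_apply hS.measurableSet,
    Measure.prod_apply hT.measurableSet, Measure.prod_apply hW.measurableSet] using
    Real.prekopa_leindler hl₀ hl₁ (measurable_measure_prodMk_left hS.measurableSet)
      (measurable_measure_prodMk_left hT.measurableSet)
      (measurable_measure_prodMk_left hW.measurableSet) (hslice_sup hS) (hslice_sup hT) hslices

theorem area_smul (r : ℝ) (S : Set (ℝ × ℝ)) : area (r • S) = r ^ 2 * area S := by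
  simp [area, Measure.addHaar_smul, ENNReal.toReal_ofReal (sq_nonneg _)]

theorem area_rpow_mul_area_rpow_le_area_smul_add_smul {l : ℝ} (hl₀ : 0 < l) (hl₁ : l < 1)
    {S T : Set (ℝ × ℝ)} (hS : IsCompact S) (hT : IsCompact T) :
    area S ^ (1 - l) * area T ^ l ≤ area ((1 - l) • S + l • T) := by
  have h := ENNReal.toReal_mono ((hS.smul _).add (hT.smul _)).measure_lt_top.ne
    (volume_rpow_mul_volume_rpow_le_volume_smul_add_smul_prod hl₀ hl₁ hS hT)
  rwa [ENNReal.toReal_mul, ← ENNReal.toReal_rpow, ← ENNReal.toReal_rpow] at h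

theorem area_le_area_add_left {A B : Set (ℝ × ℝ)} (hA : A.Nonempty) (hcA : IsCompact A)
    (hcB : IsCompact B) : area B ≤ area (A + B) := by
  rw [add_comm]
  exact ENNReal.toReal_mono (hcB.add hcA).measure_lt_top.ne
    (measure_le_measure_add_right volume B hA)

theorem area_smul_div_sqrt_area (m : ℝ) {S : Set (ℝ × ℝ)} (hS : 0 < area S) :
    area ((m / Real.sqrt (area S)) • S) = m ^ 2 := by
  have hp : 0 < Real.sqrt (area S) := Real.sqrt_pos.2 hS
  rw [area_smul, div_pow, Real.sq_sqrt hS.le]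
  field_simp

theorem sqrt_area_add_sqrt_area_le_of_pos {A B : Set (ℝ × ℝ)} (hcA : IsCompact A)
    (hcB : IsCompact B) (ha : 0 < area A) (hb : 0 < area B) :
    Real.sqrt (area A) + Real.sqrt (area B) ≤ Real.sqrt (area (A + B)) := by
  set p := Real.sqrt (area A)
  set q := Real.sqrt (area B)
  have hp : 0 < p := Real.sqrt_pos.2 ha
  have hq : 0 < q := Real.sqrt_pos.2 hb
  have hm : 0 < p + q := by positivity
  -- `A + B = (1 - l) • S + l • T` with `l = q / (p + q)` and `area S = area T = (p + q) ^ 2`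
  have key := area_rpow_mul_area_rpow_le_area_smul_add_smul (l := q / (p + q)) (by positivity)
    ((div_lt_one hm).2 (by linarith)) (hcA.smul ((p + q) / p)) (hcB.smul ((p + q) / q))
  have h1l : 1 - q / (p + q) = p / (p + q) := by
    field_simp
    ring
  rw [area_smul_div_sqrt_area _ ha, area_smul_div_sqrt_area _ hb, ← Real.rpow_add (by positivity),
    h1l, ← add_div, div_self hm.ne', Real.rpow_one, smul_smul, smul_smul,
    div_mul_div_cancel₀ hm.ne', div_self hp.ne', div_mul_div_cancel₀ hm.ne', div_self hq.ne',
    one_smul, one_smul] at key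
  exact (Real.le_sqrt' hm).2 key

/-- Brunn–Minkowski inequality in the plane. -/
theorem stmt3 (A B : Set (ℝ × ℝ)) (hA : A.Nonempty) (hB : B.Nonempty)
    (hcA : IsCompact A) (hcB : IsCompact B) :
    Real.sqrt (area (A + B)) ≥ Real.sqrt (area A) + Real.sqrt (area B) := by
  rcases (show 0 ≤ area A from ENNReal.toReal_nonneg).eq_or_lt with ha | ha
  · rw [← ha, Real.sqrt_zero, zero_add]
    exact Real.sqrt_le_sqrt (area_le_area_add_left hA hcA hcB)
  rcases (show 0 ≤ area B from ENNReal.toReal_nonneg).eq_or_lt with hb | hb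
  · rw [← hb, Real.sqrt_zero, add_zero, add_comm]
    exact Real.sqrt_le_sqrt (area_le_area_add_left hB hcB hcA)
  exact sqrt_area_add_sqrt_area_le_of_pos hcA hcB ha hb
end
end

section
/- If f, g ∈ ℂ[X,Y] are quasi-convenient polynomials of positive degree, then ν∞(f,g) := Area(Δ∞(fg)) − Area(Δ∞(f)) − Area(Δ∞(g)) ≥ 0. -/
open MvPolynomial MeasureTheory Pointwise

noncomputable section

/- The Minkowski sum `Δ∞(f) + Δ∞(g)` lies in `Δ∞(fg)`. Every vertex of the Minkowski sum of the
Newton polytopes of `f` and `g` splits uniquely as a sum of exponents of `f` and `g`, so the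
corresponding coefficient of `fg` is a product of nonzero coefficients; this gives
`conv(supp f) + conv(supp g) ⊆ conv(supp fg)`. Quasi-convenience of `g` puts points of the form
`p + (α, 0)` and `p + (0, β)` into `Δ∞(fg)` for each exponent `p` of `f`, and together with the
origin these points have `p` in their convex hull, so `supp f ⊆ Δ∞(fg)`.

Then `area(A + B) ≥ area A + area B` for compact `A`, `B`: translating `A` to the left end of `B`
and `B` to the right end of `A` gives two subsets of `A + B` meeting only in a vertical line. -/

lemma eq_and_eq_of_add_mem_extremePoints_add {𝕜 E : Type*} [Field 𝕜] [LinearOrder 𝕜]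
    [IsStrictOrderedRing 𝕜] [AddCommGroup E] [Module 𝕜 E] {A B : Set E} {a a' b b' : E}
    (ha : a ∈ A) (ha' : a' ∈ A) (hb : b ∈ B) (hb' : b' ∈ B)
    (hext : a + b ∈ (A + B).extremePoints 𝕜) (h : a' + b' = a + b) : a' = a ∧ b' = b := by
  have hmid : a + b ∈ openSegment 𝕜 (a' + b) (a + b') := by
    refine ⟨1 / 2, 1 / 2, by norm_num, by norm_num, by norm_num, ?_⟩
    calc (1 / 2 : 𝕜) • (a' + b) + (1 / 2 : 𝕜) • (a + b')
        = (1 / 2 : 𝕜) • (a' + b') + (1 / 2 : 𝕜) • (a + b) := by module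
      _ = a + b := by rw [h]; module
  obtain ⟨h₁, h₂⟩ :=
    (mem_extremePoints.1 hext).2 _ (Set.add_mem_add ha' hb) _ (Set.add_mem_add ha hb') hmid
  exact ⟨add_right_cancel h₁, add_left_cancel h₂⟩

lemma Convex.mem_of_add_mem_of_add_mem {E : Type*} [AddCommGroup E] [Module ℝ E] {N : Set E}
    (hN : Convex ℝ N) (h0 : 0 ∈ N) {u v : E} {s t : ℝ} (hs : 0 ≤ s) (ht : 0 ≤ t)
    (hu : s • u + t • v + u ∈ N) (hv : s • u + t • v + v ∈ N) : s • u + t • v ∈ N := by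
  rcases (add_nonneg hs ht).eq_or_lt with hst | hst
  · obtain ⟨rfl, rfl⟩ : s = 0 ∧ t = 0 := ⟨by linarith, by linarith⟩
    simpa using h0
  -- `x = s • u + t • v` is `(s + t) / (1 + s + t)` times a point of the segment `[x + u, x + v]`
  have hw : (s / (s + t)) • (s • u + t • v + u) + (t / (s + t)) • (s • u + t • v + v) ∈ N :=
    hN hu hv (by positivity) (by positivity) (by field_simp)
  have hx := hN.smul_mem_of_zero_mem h0 hw (t := (s + t) / (1 + s + t))
    ⟨by positivity, (div_le_one (by positivity)).2 (by linarith)⟩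
  convert hx using 1
  match_scalars <;> field_simp <;> ring

def exponentPt : (Fin 2 →₀ ℕ) →+ ℝ × ℝ where
  toFun m := ((m 0 : ℝ), (m 1 : ℝ))
  map_zero' := by simp
  map_add' m n := by simp

lemma exponentPt_injective : Function.Injective exponentPt := by
  intro m n h
  simp only [exponentPt, AddMonoidHom.coe_mk, ZeroHom.coe_mk, Prod.mk.injEq, Nat.cast_inj] at h
  ext i
  fin_cases i
  exacts [h.1, h.2]

lemma exponentPt_single_zero (k : ℕ) : exponentPt (Finsupp.single 0 k) = ((k : ℝ), 0) := by
  simp [exponentPt]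

lemma exponentPt_single_one (k : ℕ) : exponentPt (Finsupp.single 1 k) = (0, (k : ℝ)) := by
  simp [exponentPt]

def exponentSet (f : P2) : Set (ℝ × ℝ) := exponentPt '' f.support

lemma exponentPt_mem_exponentSet {f : P2} {m : Fin 2 →₀ ℕ} (hm : f.coeff m ≠ 0) :
    exponentPt m ∈ exponentSet f :=
  ⟨m, mem_support_iff.2 hm, rfl⟩

lemma exponentSet_finite (f : P2) : (exponentSet f).Finite :=
  f.support.finite_toSet.image _

lemma newton_eq_convexHull (f : P2) : newton f = convexHull ℝ ({0} ∪ exponentSet f) := by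
  simp only [newton, exponentSet, exponentPt, AddMonoidHom.coe_mk, ZeroHom.coe_mk]
  congr 2
  ext p
  simp [eq_comm]

lemma zero_mem_newton (f : P2) : (0 : ℝ × ℝ) ∈ newton f := by
  rw [newton_eq_convexHull]
  exact subset_convexHull ℝ _ (Set.mem_union_left _ rfl)

lemma convex_newton (f : P2) : Convex ℝ (newton f) := by
  rw [newton_eq_convexHull]
  exact convex_convexHull ℝ _

lemma isCompact_newton (f : P2) : IsCompact (newton f) := by
  rw [newton_eq_convexHull]
  exact ((Set.finite_singleton _).union (exponentSet_finite f)).isCompact_convexHull ℝ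

lemma extremePoints_convexHull_exponentSet_add_subset (f g : P2) :
    (convexHull ℝ (exponentSet f + exponentSet g)).extremePoints ℝ ⊆ exponentSet (f * g) := by
  intro v hv
  have hvS : v ∈ (exponentSet f + exponentSet g).extremePoints ℝ :=
    inter_extremePoints_subset_extremePoints_of_subset (subset_convexHull ℝ _)
      ⟨extremePoints_convexHull_subset hv, hv⟩
  obtain ⟨_, ⟨m, hm, rfl⟩, _, ⟨n, hn, rfl⟩, rfl⟩ := Set.mem_add.1 hvS.1
  have hunique : UniqueAdd f.support g.support m n := by
    intro m' n' hm' hn' h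
    have hpt := eq_and_eq_of_add_mem_extremePoints_add (Set.mem_image_of_mem _ hm)
      (Set.mem_image_of_mem _ hm') (Set.mem_image_of_mem _ hn) (Set.mem_image_of_mem _ hn') hvS
      (by rw [← map_add, ← map_add, h])
    exact ⟨exponentPt_injective hpt.1, exponentPt_injective hpt.2⟩
  rw [← map_add]
  refine exponentPt_mem_exponentSet ?_
  have hcoeff : (f * g).coeff (m + n) = f.coeff m * g.coeff n :=
    AddMonoidAlgebra.coeff_mul_add_of_uniqueAdd hunique
  rw [hcoeff]
  exact mul_ne_zero (mem_support_iff.1 hm) (mem_support_iff.1 hn)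

lemma convexHull_exponentSet_add_subset (f g : P2) :
    convexHull ℝ (exponentSet f) + convexHull ℝ (exponentSet g) ⊆
      convexHull ℝ (exponentSet (f * g)) := by
  have hK := ((exponentSet_finite f).add (exponentSet_finite g)).isCompact_convexHull ℝ
  rw [← convexHull_add, ← closure_convexHull_extremePoints hK (convex_convexHull ℝ _),
    ← ((exponentSet_finite (f * g)).isCompact_convexHull ℝ).isClosed.closure_eq]
  exact closure_mono (convexHull_mono (extremePoints_convexHull_exponentSet_add_subset f g))

lemma exponentSet_add_subset_newton_mul (f g : P2) :
    exponentSet f + exponentSet g ⊆ newton (f * g) := by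
  calc exponentSet f + exponentSet g
      ⊆ convexHull ℝ (exponentSet f) + convexHull ℝ (exponentSet g) :=
        Set.add_subset_add (subset_convexHull ℝ _) (subset_convexHull ℝ _)
    _ ⊆ convexHull ℝ (exponentSet (f * g)) := convexHull_exponentSet_add_subset f g
    _ ⊆ newton (f * g) := by
        rw [newton_eq_convexHull]
        exact convexHull_mono Set.subset_union_right

lemma exponentSet_subset_newton_mul (f : P2) {g : P2} (hg : QuasiConvenient g) :
    exponentSet f ⊆ newton (f * g) := by
  rintro _ ⟨m, hm, rfl⟩
  obtain ⟨⟨α, hα⟩, ⟨β, hβ⟩⟩ := hg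
  have hsum : ∀ {n}, g.coeff n ≠ 0 → exponentPt m + exponentPt n ∈ newton (f * g) :=
    fun hn => exponentSet_add_subset_newton_mul f g
      (Set.add_mem_add ⟨m, hm, rfl⟩ (exponentPt_mem_exponentSet hn))
  by_cases hαβ : α = 0 ∨ β = 0
  · have h0 : g.coeff 0 ≠ 0 := by
      rcases hαβ with rfl | rfl
      · simpa using hα
      · simpa using hβ
    simpa using hsum h0
  rw [not_or] at hαβ
  have hαpos : (0 : ℝ) < α := by exact_mod_cast Nat.pos_of_ne_zero hαβ.1
  have hβpos : (0 : ℝ) < β := by exact_mod_cast Nat.pos_of_ne_zero hαβ.2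
  have hm_eq : exponentPt m = ((m 0 : ℝ) / α) • exponentPt (Finsupp.single 0 α) +
      ((m 1 : ℝ) / β) • exponentPt (Finsupp.single 1 β) := by
    simp only [exponentPt_single_zero, exponentPt_single_one]
    ext <;> simp [exponentPt, hαpos.ne', hβpos.ne']
  have hu := hsum hα
  have hv := hsum hβ
  rw [hm_eq] at hu hv ⊢
  exact (convex_newton _).mem_of_add_mem_of_add_mem (zero_mem_newton _) (by positivity)
    (by positivity) hu hv

lemma newton_add_newton_subset {f g : P2} (hf : QuasiConvenient f) (hg : QuasiConvenient g) :
    newton f + newton g ⊆ newton (f * g) := by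
  rw [newton_eq_convexHull f, newton_eq_convexHull g, ← convexHull_add]
  refine convexHull_min ?_ (convex_newton (f * g))
  rintro _ ⟨x, hx, y, hy, rfl⟩
  rcases hx with rfl | hx <;> rcases hy with rfl | hy
  · simpa using zero_mem_newton (f * g)
  · simpa [mul_comm f g] using exponentSet_subset_newton_mul g hf hy
  · simpa using exponentSet_subset_newton_mul f hg hx
  · exact exponentSet_add_subset_newton_mul f g (Set.add_mem_add hx hy)

lemma volume_setOf_fst_eq (c : ℝ) : volume {p : ℝ × ℝ | p.1 = c} = 0 := by
  rw [show {p : ℝ × ℝ | p.1 = c} = {c} ×ˢ Set.univ by ext; simp, Measure.volume_eq_prod,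
    Measure.prod_prod]
  simp

lemma volume_add_volume_le_volume_add {A B : Set (ℝ × ℝ)} (hA : IsCompact A) (hB : IsCompact B)
    (hAne : A.Nonempty) (hBne : B.Nonempty) :
    volume A + volume B ≤ volume (A + B) := by
  obtain ⟨a, haA, ha⟩ := hA.exists_isMaxOn hAne continuous_fst.continuousOn
  obtain ⟨b, hbB, hb⟩ := hB.exists_isMinOn hBne continuous_fst.continuousOn
  have hleft : b +ᵥ A ⊆ A + B := by
    rintro _ ⟨y, hy, rfl⟩
    exact ⟨y, hy, b, hbB, add_comm y b⟩
  have hright : a +ᵥ B ⊆ A + B := by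
    rintro _ ⟨y, hy, rfl⟩
    exact ⟨a, haA, y, hy, rfl⟩
  have hinter : (b +ᵥ A) ∩ (a +ᵥ B) ⊆ {p : ℝ × ℝ | p.1 = a.1 + b.1} := by
    rintro _ ⟨⟨y, hy, rfl⟩, ⟨z, hz, hzy⟩⟩
    have h₁ : y.1 ≤ a.1 := ha hy
    have h₂ : b.1 ≤ z.1 := hb hz
    have h₃ : a.1 + z.1 = b.1 + y.1 := congrArg Prod.fst hzy
    change b.1 + y.1 = a.1 + b.1
    linarith
  calc volume A + volume B = volume (b +ᵥ A) + volume (a +ᵥ B) := by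
        rw [measure_vadd, measure_vadd]
      _ = volume ((b +ᵥ A) ∪ (a +ᵥ B)) := by
        rw [← measure_union_add_inter _ (hB.vadd a).measurableSet,
          measure_mono_null hinter (volume_setOf_fst_eq _), add_zero]
      _ ≤ volume (A + B) := measure_mono (Set.union_subset hleft hright)

theorem stmt4_general (f g : P2) (hf : QuasiConvenient f) (hg : QuasiConvenient g) :
    0 ≤ nuInf f g := by
  have hvol : volume (newton f) + volume (newton g) ≤ volume (newton (f * g)) :=
    (volume_add_volume_le_volume_add (isCompact_newton f) (isCompact_newton g)
      ⟨0, zero_mem_newton f⟩ ⟨0, zero_mem_newton g⟩).trans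
      (measure_mono (newton_add_newton_subset hf hg))
  have harea : area (newton f) + area (newton g) ≤ area (newton (f * g)) := by
    rw [area, area, area, ← ENNReal.toReal_add (isCompact_newton f).measure_ne_top
      (isCompact_newton g).measure_ne_top]
    exact ENNReal.toReal_mono (isCompact_newton (f * g)).measure_ne_top hvol
  rw [nuInf]
  linarith

/-- For quasi-convenient polynomials of positive degree, `ν∞(f, g) ≥ 0`. -/
theorem stmt4 (f g : P2) (hf : QuasiConvenient f) (hg : QuasiConvenient g)
    (hdf : 0 < f.totalDegree) (hdg : 0 < g.totalDegree) :
    0 ≤ nuInf f g :=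
  stmt4_general f g hf hg
end
end

section
/- Let f ∈ ℂ[X,Y] be quasi-convenient and nondegenerate at infinity, and let g, h ∈ ℂ[X,Y] be coprime divisors of f of positive degree. Then the pair (g,h) is nondegenerate at infinity, i.e. for every real vector w = [p,q] with p > 0 or q > 0, the system init(g,w)(X,Y) = init(h,w)(X,Y) = 0 has no solution in (ℂ*)². -/
open MvPolynomial MeasureTheory Pointwise

noncomputable section

lemma wt_add (w : ℝ × ℝ) (m n : Fin 2 →₀ ℕ) : wt w (m + n) = wt w m + wt w n := by
  simp only [wt, Finsupp.add_apply]; push_cast; ring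

lemma coeff_initForm (w : ℝ × ℝ) (f : P2) (m : Fin 2 →₀ ℕ) :
    (initForm w f).coeff m = if wt w m = dw w f then f.coeff m else 0 := by
  classical
  rw [initForm, coeff_sum]
  by_cases hm : m ∈ f.support
  · rw [Finset.sum_eq_single_of_mem m hm]
    · split <;> simp [coeff_monomial]
    · intro b _ hb
      split
      · simp [coeff_monomial, hb]
      · simp
  · rw [Finset.sum_eq_zero, eq_comm]
    · simp [MvPolynomial.notMem_support_iff.mp hm]
    · intro b hb
      have hbm : b ≠ m := fun e => hm (e ▸ hb)
      split
      · simp [coeff_monomial, hbm]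
      · simp

lemma wt_le_dw (w : ℝ × ℝ) {f : P2} {m : Fin 2 →₀ ℕ} (hm : m ∈ f.support) :
    wt w m ≤ dw w f :=
  le_csSup ((f.support.finite_toSet.image _).bddAbove) ⟨m, hm, rfl⟩

lemma exists_dw (w : ℝ × ℝ) {f : P2} (hf : f ≠ 0) :
    ∃ m ∈ f.support, wt w m = dw w f := by
  have hne : (wt w '' (f.support : Set (Fin 2 →₀ ℕ))).Nonempty := by
    obtain ⟨m, hm⟩ := (MvPolynomial.support_nonempty.mpr hf)
    exact ⟨wt w m, m, hm, rfl⟩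
  obtain ⟨m, hm, hwt⟩ := hne.csSup_mem (f.support.finite_toSet.image _)
  exact ⟨m, hm, hwt⟩

lemma initForm_ne_zero (w : ℝ × ℝ) {f : P2} (hf : f ≠ 0) : initForm w f ≠ 0 := by
  obtain ⟨m, hm, hwt⟩ := exists_dw w hf
  intro h0
  have := coeff_initForm w f m
  rw [h0, if_pos hwt] at this
  exact MvPolynomial.mem_support_iff.mp hm this.symm

lemma mem_support_initForm {w : ℝ × ℝ} {f : P2} {m : Fin 2 →₀ ℕ}
    (hm : m ∈ (initForm w f).support) : m ∈ f.support ∧ wt w m = dw w f := by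
  have := MvPolynomial.mem_support_iff.mp hm
  rw [coeff_initForm] at this
  by_cases hw : wt w m = dw w f
  · rw [if_pos hw] at this
    exact ⟨MvPolynomial.mem_support_iff.mpr this, hw⟩
  · rw [if_neg hw] at this; exact absurd rfl this

lemma initForm_mul (w : ℝ × ℝ) {a b : P2} (ha : a ≠ 0) (hb : b ≠ 0) :
    initForm w (a * b) = initForm w a * initForm w b := by
  classical
  have hab : a * b ≠ 0 := mul_ne_zero ha hb
  -- key2 : on max-weight monomials, coefficients agree
  have key2 : ∀ m : Fin 2 →₀ ℕ, wt w m = dw w a + dw w b →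
      (a * b).coeff m = (initForm w a * initForm w b).coeff m := by
    intro m hm
    rw [coeff_mul, coeff_mul]
    refine Finset.sum_congr rfl ?_
    rintro ⟨u, v⟩ huv
    have huv' : u + v = m := Finset.HasAntidiagonal.mem_antidiagonal.mp huv
    rw [coeff_initForm, coeff_initForm]
    by_cases hu : wt w u = dw w a
    · by_cases hv : wt w v = dw w b
      · rw [if_pos hu, if_pos hv]
      · rw [if_pos hu, if_neg hv]
        by_cases hbv : b.coeff v = 0
        · simp [hbv]
        · have : wt w v < dw w b :=
            lt_of_le_of_ne (wt_le_dw w (MvPolynomial.mem_support_iff.mpr hbv)) hv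
          by_cases hau : a.coeff u = 0
          · simp [hau]
          · exfalso
            have hua : wt w u ≤ dw w a := wt_le_dw w (MvPolynomial.mem_support_iff.mpr hau)
            have := wt_add w u v
            rw [huv', hm] at this
            linarith
    · rw [if_neg hu]
      by_cases hau : a.coeff u = 0
      · simp [hau]
      · have hua : wt w u < dw w a :=
          lt_of_le_of_ne (wt_le_dw w (MvPolynomial.mem_support_iff.mpr hau)) hu
        by_cases hbv : b.coeff v = 0
        · simp [hbv]
        · exfalso
          have hvb : wt w v ≤ dw w b := wt_le_dw w (MvPolynomial.mem_support_iff.mpr hbv)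
          have := wt_add w u v
          rw [huv', hm] at this
          linarith
  -- key3 : support of product of initial forms has max weight
  have key3 : ∀ m ∈ (initForm w a * initForm w b).support, wt w m = dw w a + dw w b := by
    intro m hm
    have hc := MvPolynomial.mem_support_iff.mp hm
    rw [coeff_mul] at hc
    obtain ⟨⟨u, v⟩, huv, hne⟩ := Finset.exists_ne_zero_of_sum_ne_zero hc
    have huv' : u + v = m := Finset.HasAntidiagonal.mem_antidiagonal.mp huv
    have hu := mem_support_initForm (m := u) (MvPolynomial.mem_support_iff.mpr
      (left_ne_zero_of_mul hne))
    have hv := mem_support_initForm (m := v) (MvPolynomial.mem_support_iff.mpr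
      (right_ne_zero_of_mul hne))
    rw [← huv', wt_add, hu.2, hv.2]
  -- key1 : every monomial of a*b has weight ≤ dw a + dw b
  have key1 : ∀ m ∈ (a * b).support, wt w m ≤ dw w a + dw w b := by
    intro m hm
    have hc := MvPolynomial.mem_support_iff.mp hm
    rw [coeff_mul] at hc
    obtain ⟨⟨u, v⟩, huv, hne⟩ := Finset.exists_ne_zero_of_sum_ne_zero hc
    have huv' : u + v = m := Finset.HasAntidiagonal.mem_antidiagonal.mp huv
    have hu : wt w u ≤ dw w a :=
      wt_le_dw w (MvPolynomial.mem_support_iff.mpr (left_ne_zero_of_mul hne))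
    have hv : wt w v ≤ dw w b :=
      wt_le_dw w (MvPolynomial.mem_support_iff.mpr (right_ne_zero_of_mul hne))
    rw [← huv', wt_add]
    linarith
  -- dw (a*b) = dw a + dw b
  have hprod : initForm w a * initForm w b ≠ 0 :=
    mul_ne_zero (initForm_ne_zero w ha) (initForm_ne_zero w hb)
  obtain ⟨m0, hm0⟩ := MvPolynomial.support_nonempty.mpr hprod
  have hm0wt : wt w m0 = dw w a + dw w b := key3 m0 hm0
  have hm0ab : m0 ∈ (a * b).support := by
    rw [MvPolynomial.mem_support_iff, key2 m0 hm0wt]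
    exact MvPolynomial.mem_support_iff.mp hm0
  have hdw : dw w (a * b) = dw w a + dw w b := by
    apply le_antisymm
    · refine csSup_le ⟨wt w m0, Set.mem_image_of_mem _ hm0ab⟩ ?_
      rintro x ⟨m, hm, rfl⟩
      exact key1 m hm
    · rw [← hm0wt]
      exact wt_le_dw w hm0ab
  ext m
  rw [coeff_initForm, hdw]
  by_cases hm : wt w m = dw w a + dw w b
  · rw [if_pos hm]
    exact key2 m hm
  · rw [if_neg hm, eq_comm]
    rw [← MvPolynomial.notMem_support_iff]
    intro hmem
    exact hm (key3 m hmem)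

/-- Coprime divisors of a quasi-convenient polynomial nondegenerate at infinity
form a pair nondegenerate at infinity. -/
theorem stmt7 (f g h : P2) (hf : QuasiConvenient f) (hnd : NondegAtInf f)
    (hgf : g ∣ f) (hhf : h ∣ f) (hco : CoprimeDiv g h)
    (hdg : 0 < g.totalDegree) (hdh : 0 < h.totalDegree) :
    PairNondegAtInf g h := by
  intro w hw
  rintro ⟨x, y, hx, hy, hgz, hhz⟩
  have hf0 : f ≠ 0 := by
    obtain ⟨⟨a0, ha0⟩, -⟩ := hf
    intro e; rw [e] at ha0; simp at ha0
  have hg0 : g ≠ 0 := by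
    rintro rfl; simp at hdg
  have hh0 : h ≠ 0 := by
    rintro rfl; simp at hdh
  have hrel : IsRelPrime g h := fun {d} hd1 hd2 => hco d hd1 hd2
  obtain ⟨k, hk⟩ := hrel.mul_dvd hgf hhf
  have hk0 : k ≠ 0 := by
    rintro rfl; rw [mul_zero] at hk; exact hf0 hk
  have hinit : initForm w f = initForm w g * (initForm w h * initForm w k) := by
    rw [hk, mul_assoc, initForm_mul w hg0 (mul_ne_zero hh0 hk0), initForm_mul w hh0 hk0]
  have hB : eval ![x, y] (initForm w h * initForm w k) = 0 := by
    rw [map_mul, hhz, zero_mul]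
  refine hnd w hw ⟨x, y, hx, hy, ?_, ?_, ?_⟩
  · rw [hinit, map_mul, hgz, zero_mul]
  · simp [hinit, pderiv_mul, hgz, hhz]
  · simp [hinit, pderiv_mul, hgz, hhz]
end
end
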